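/- arXiv:1904.10783 — 7 statements merged into one kernel-verified Lean document; each statement's English description precedes it below -/
import Mathlib

section
/- If A and B are square matrices of the same size with AB = BA, then A^D B = B A^D and A B^D = B^D A. -/
/-! If `x` is a Drazin inverse of `a` of index `k`, then `x = x ^ (k + 1) * a ^ k = a ^ k * x ^ (k + 1)`
and `a ^ k = a ^ (k + 1) * x = x * a ^ (k + 1)`. Moving an element `c` that commutes with `a` across
these powers of `a` gives `x * c = x * a * c * x = c * x`. The argument (Drazin's) is purely
multiplicative, so it holds in any monoid. -/

def IsDrazinInverse {n : Type*} [Fintype n] [DecidableEq n]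
    (A X : Matrix n n ℂ) (k : ℕ) : Prop :=
  A ^ (k + 1) * X = A ^ k ∧ X * A * X = X ∧ A * X = X * A

def HasIndex {n : Type*} [Fintype n] [DecidableEq n]
    (A : Matrix n n ℂ) (k : ℕ) : Prop :=
  LinearMap.range (Matrix.mulVecLin (A ^ k)) = LinearMap.range (Matrix.mulVecLin (A ^ (k + 1))) ∧
  ∀ j < k, LinearMap.range (Matrix.mulVecLin (A ^ j)) ≠ LinearMap.range (Matrix.mulVecLin (A ^ (j + 1)))

section Monoid

variable {M : Type*} [Monoid M] {a x c : M} {k : ℕ}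

theorem Commute.pow_succ_mul_pow_eq_self (hax : Commute a x) (hx : x * a * x = x) (j : ℕ) :
    x ^ (j + 1) * a ^ j = x := by
  induction j with
  | zero => simp
  | succ j ih =>
    calc x ^ (j + 2) * a ^ (j + 1) = x * (x ^ (j + 1) * a ^ j) * a := by
          rw [pow_succ' x, pow_succ a]; simp only [mul_assoc]
      _ = x * (a * x) := by rw [ih, mul_assoc, hax.eq]
      _ = x := by rw [← mul_assoc, hx]

theorem Commute.pow_mul_pow_succ_eq_self (hax : Commute a x) (hx : x * a * x = x) (j : ℕ) :
    a ^ j * x ^ (j + 1) = x := by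
  rw [(hax.pow_pow j (j + 1)).eq, hax.pow_succ_mul_pow_eq_self hx]

theorem Commute.of_drazin (hk : a ^ (k + 1) * x = a ^ k) (hx : x * a * x = x)
    (hax : Commute a x) (hac : Commute a c) : Commute x c := by
  have hk' : x * a ^ (k + 1) = a ^ k := by rw [← (hax.pow_left (k + 1)).eq, hk]
  have hca : ∀ j, a ^ j * c = c * a ^ j := fun j => (hac.pow_left j).eq
  have hxc : x * c = x * a * c * x :=
    calc x * c = x ^ (k + 1) * (a ^ k * c) := by
          rw [← mul_assoc, hax.pow_succ_mul_pow_eq_self hx]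
      _ = x ^ (k + 1) * a ^ (k + 1) * c * x := by
          rw [hca, ← hk, ← mul_assoc c, ← hca]; simp only [mul_assoc]
      _ = x * a * c * x := by
          rw [pow_succ a, ← mul_assoc, hax.pow_succ_mul_pow_eq_self hx]
  have hcx : c * x = x * a * c * x :=
    calc c * x = (c * a ^ k) * x ^ (k + 1) := by
          rw [mul_assoc, hax.pow_mul_pow_succ_eq_self hx]
      _ = x * c * (a ^ (k + 1) * x ^ (k + 1)) := by
          rw [← hca, ← hk', mul_assoc x, hca]; simp only [mul_assoc]
      _ = x * a * c * x := by
          rw [pow_succ', mul_assoc a, hax.pow_mul_pow_succ_eq_self hx, mul_assoc x a c, hac.eq]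
          simp only [mul_assoc]
  exact hxc.trans hcx.symm

end Monoid

theorem drazin_commute {n : Type*} [Fintype n] [DecidableEq n]
    (A B X Y : Matrix n n ℂ) (k : ℕ)
    (hAB : A * B = B * A)
    (hX : IsDrazinInverse A X k) (hY : IsDrazinInverse B Y k) :
    X * B = B * X ∧ A * Y = Y * A := by
  obtain ⟨hA, hXAX, hAX⟩ := hX
  obtain ⟨hB, hYBY, hBY⟩ := hY
  exact ⟨(Commute.of_drazin hA hXAX hAX hAB).eq,
    (Commute.of_drazin hB hYBY hBY hAB.symm).symm.eq⟩
end

section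
/- If AB = BA, then (AB)^D = B^D A^D = A^D B^D. -/
/-!
A Drazin inverse `d` of `a` commutes with everything that commutes with `a`: with `p = 1 - a * d`
one has `a ^ k * p = p * a ^ k = 0` and `d = d ^ (k + 1) * a ^ k = a ^ k * d ^ (k + 1)`, so for `x`
commuting with `a` both `d * x * p` and `p * x * d` vanish, whence
`d * x = d * x * a * d = a * d * x * d = x * d`.
Hence `A`, `B`, `A^D`, `B^D` pairwise commute, and the identities defining `(A * B)^D = B^D * A^D`
split into those of `A^D` and `B^D`.
-/

section Ring

variable {R : Type*} [Ring R] {a d : R}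

lemma mul_mul_pow_eq_self (had : d * a * d = d) (m : ℕ) : d * (a * d) ^ m = d := by
  induction m with
  | zero => rw [pow_zero, mul_one]
  | succ m ih => rw [pow_succ, ← mul_assoc, ih, ← mul_assoc, had]

lemma eq_pow_succ_mul_pow (had : d * a * d = d) (hcomm : Commute a d) (m : ℕ) :
    d = d ^ (m + 1) * a ^ m := by
  rw [pow_succ', mul_assoc, ← (hcomm.pow_pow m m).eq, ← hcomm.mul_pow, mul_mul_pow_eq_self had]

lemma commute_drazin_of_commute {x : R} {k : ℕ} (hpow : a ^ (k + 1) * d = a ^ k)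
    (had : d * a * d = d) (hcomm : Commute a d) (hx : Commute a x) : Commute d x := by
  have hd : d = d ^ (k + 1) * a ^ k := eq_pow_succ_mul_pow had hcomm k
  have hd' : d = a ^ k * d ^ (k + 1) := hd.trans (hcomm.pow_pow k (k + 1)).eq.symm
  have hap : a ^ k * (1 - a * d) = 0 := by
    rw [mul_sub, mul_one, ← mul_assoc, ← pow_succ, hpow, sub_self]
  have hpa : (1 - a * d) * a ^ k = 0 :=
    (((Commute.one_right _).sub_right ((Commute.refl a).mul_right hcomm)).pow_left k).eq ▸ hap
  have hleft : d * x * (1 - a * d) = 0 := calc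
    d * x * (1 - a * d) = d ^ (k + 1) * a ^ k * x * (1 - a * d) := by rw [← hd]
    _ = d ^ (k + 1) * x * (a ^ k * (1 - a * d)) := by
      rw [mul_assoc _ (a ^ k), (hx.pow_left k).eq]; simp only [mul_assoc]
    _ = 0 := by rw [hap, mul_zero]
  have hright : (1 - a * d) * x * d = 0 := calc
    (1 - a * d) * x * d = (1 - a * d) * x * (a ^ k * d ^ (k + 1)) := by rw [← hd']
    _ = ((1 - a * d) * a ^ k) * x * d ^ (k + 1) := by
      rw [mul_assoc _ (a ^ k), (hx.pow_left k).eq]; simp only [mul_assoc]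
    _ = 0 := by rw [hpa, zero_mul, zero_mul]
  calc d * x = d * x * (a * d) := by
        rwa [mul_sub, mul_one, sub_eq_zero] at hleft
    _ = d * (a * x) * d := by rw [hx.eq]; simp only [mul_assoc]
    _ = a * d * x * d := by simp only [← mul_assoc, hcomm.eq]
    _ = x * d := by rwa [sub_mul, sub_mul, one_mul, sub_eq_zero, eq_comm] at hright

end Ring

theorem drazin_mul_of_commute {n : Type*} [Fintype n] [DecidableEq n]
    (A B X Y : Matrix n n ℂ) (k : ℕ)
    (hAB : A * B = B * A)
    (hX : IsDrazinInverse A X k) (hY : IsDrazinInverse B Y k) :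
    IsDrazinInverse (A * B) (Y * X) k ∧ Y * X = X * Y := by
  obtain ⟨hXpow, hXAX, hAX⟩ := hX
  obtain ⟨hYpow, hYBY, hBY⟩ := hY
  replace hAB : Commute A B := hAB
  have hBX : Commute B X := (commute_drazin_of_commute hXpow hXAX hAX hAB).symm
  have hAY : Commute A Y := (commute_drazin_of_commute hYpow hYBY hBY hAB.symm).symm
  have hYX : Commute Y X := commute_drazin_of_commute hYpow hYBY hBY hBX
  refine ⟨⟨?_, ?_, ?_⟩, hYX.eq⟩
  · calc (A * B) ^ (k + 1) * (Y * X) = A ^ (k + 1) * (B ^ (k + 1) * Y) * X := by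
          rw [hAB.mul_pow]; simp only [mul_assoc]
      _ = A ^ k * B ^ k := by
          rw [hYpow, mul_assoc, (hBX.pow_left k).eq, ← mul_assoc, hXpow]
      _ = (A * B) ^ k := (hAB.mul_pow k).symm
  · have hswap : Commute (X * A) (B * Y) :=
      (hBX.symm.mul_right hYX.symm).mul_left (hAB.mul_right hAY)
    calc Y * X * (A * B) * (Y * X) = Y * ((X * A) * (B * Y)) * X := by simp only [mul_assoc]
      _ = Y * B * Y * (X * A * X) := by rw [hswap.eq]; simp only [mul_assoc]
      _ = Y * X := by rw [hYBY, hXAX]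
  · exact ((hAY.mul_right hAX).mul_left (Commute.mul_right hBY hBX)).eq
end

section
/- For square matrices A and B of the same size, (AB)^D = A ((BA)^2)^D B. -/
namespace Monoid

variable {M : Type*} [Monoid M]

structure IsDrazinInv (a z : M) (k : ℕ) : Prop where
  pow_succ_mul : a ^ (k + 1) * z = a ^ k
  mul_mul_self : z * a * z = z
  commute : Commute a z

lemma pow_mul_pow_succ_of_mul_mul_self {a z : M} (h : a * (z * z) = z) (m : ℕ) :
    a ^ m * z ^ (m + 1) = z := by
  induction m with
  | zero => simp
  | succ m ih =>
    calc a ^ (m + 1) * z ^ (m + 1 + 1) = a ^ m * (a * (z * z)) * z ^ m := by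
          simp only [pow_succ a, pow_succ' z, mul_assoc]
      _ = z := by rw [h, mul_assoc, ← pow_succ', ih]

namespace IsDrazinInv

variable {a z : M} {k : ℕ}

lemma pow_mul_pow_succ (h : IsDrazinInv a z k) (m : ℕ) : a ^ m * z ^ (m + 1) = z :=
  pow_mul_pow_succ_of_mul_mul_self (by rw [← mul_assoc, h.commute.eq, h.mul_mul_self]) m

lemma pow_succ_mul_pow (h : IsDrazinInv a z k) (m : ℕ) : z ^ (m + 1) * a ^ m = z := by
  rw [← (h.commute.pow_pow m (m + 1)).eq, h.pow_mul_pow_succ]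

/-- Both `z s` and `s z` equal `z s a z`: expand `z = z^(k+1) a^k = a^k z^(k+1)`, move `s` across
`a^k`, and absorb it with `a^k = a^(k+1) z = z a^(k+1)`. -/
theorem commute_of_commute (h : IsDrazinInv a z k) {s : M} (hs : Commute a s) :
    Commute z s := by
  have hzk : a ^ k = z * a ^ (k + 1) := by rw [← h.commute.pow_left, h.pow_succ_mul]
  have hzs : z * s = z * s * a * z :=
    calc z * s = z ^ (k + 1) * a ^ k * s := by rw [h.pow_succ_mul_pow]
      _ = z ^ (k + 1) * (s * (a ^ (k + 1) * z)) := by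
          rw [mul_assoc, (hs.pow_left k).eq, h.pow_succ_mul]
      _ = z ^ (k + 1) * a ^ (k + 1) * s * z := by
          rw [← mul_assoc s, ← (hs.pow_left _).eq]
          simp only [mul_assoc]
      _ = z * a * s * z := by rw [pow_succ a, ← mul_assoc, h.pow_succ_mul_pow]
      _ = z * s * a * z := by rw [mul_assoc z a, hs.eq, ← mul_assoc]
  have hsz : s * z = z * s * a * z :=
    calc s * z = s * a ^ k * z ^ (k + 1) := by rw [mul_assoc, h.pow_mul_pow_succ]
      _ = z * s * a ^ (k + 1) * z ^ (k + 1) := by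
          rw [← (hs.pow_left k).eq, hzk, mul_assoc z, (hs.pow_left _).eq, ← mul_assoc]
      _ = z * s * a * z := by
          rw [pow_succ' a, mul_assoc (z * s), mul_assoc a, h.pow_mul_pow_succ, ← mul_assoc]
  exact hzs.trans hsz.symm

end IsDrazinInv

lemma mul_pow_succ_eq_mul_mul_pow_mul (a b : M) (n : ℕ) :
    (a * b) ^ (n + 1) = a * (b * a) ^ n * b := by
  rw [pow_succ, ← mul_assoc, mul_pow_mul]

theorem IsDrazinInv.cline {a b z : M} {k : ℕ} (h : IsDrazinInv ((b * a) ^ 2) z k) :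
    IsDrazinInv (a * b) (a * z * b) (2 * k + 1) := by
  have hcomm : Commute z (b * a) := h.commute_of_commute ((Commute.refl _).pow_left 2)
  refine ⟨?_, ?_, ?_⟩
  · calc (a * b) ^ (2 * k + 1 + 1) * (a * z * b)
        = a * (((b * a) ^ 2) ^ (k + 1) * z) * b := by
          rw [mul_pow_succ_eq_mul_mul_pow_mul, ← pow_mul, mul_add, mul_one, pow_add (b * a) _ 2, sq,
            pow_succ]
          simp only [mul_assoc]
      _ = (a * b) ^ (2 * k + 1) := by
          rw [h.pow_succ_mul, ← pow_mul, mul_pow_succ_eq_mul_mul_pow_mul]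
  · calc a * z * b * (a * b) * (a * z * b) = a * (z * (b * a) ^ 2 * z) * b := by
          simp only [sq, mul_assoc]
      _ = a * z * b := by rw [h.mul_mul_self, mul_assoc]
  · calc a * b * (a * z * b) = a * ((b * a) * z) * b := by simp only [mul_assoc]
      _ = a * z * b * (a * b) := by rw [← hcomm.eq]; simp only [mul_assoc]

end Monoid

theorem drazin_mul_cline {n : Type*} [Fintype n] [DecidableEq n]
    (A B Z : Matrix n n ℂ) (k : ℕ)
    (hZ : IsDrazinInverse ((B * A) ^ 2) Z k) :
    ∃ m, IsDrazinInverse (A * B) (A * Z * B) m :=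
  let ⟨hpow, hmul, hcomm⟩ := hZ
  let ⟨hpow', hmul', hcomm'⟩ := Monoid.IsDrazinInv.cline ⟨hpow, hmul, hcomm⟩
  ⟨2 * k + 1, hpow', hmul', hcomm'⟩
end

section
/- If AB = BA = 0, then (A + B)^D = A^D + B^D and (A − B)^D = A^D − B^D. -/
/-!
If `AB = BA = 0`, every product of `A` or `A^D` with `B` or `B^D` vanishes, because
`A^D = (A^D)^2 A = A (A^D)^2` absorbs the factor `A` next to `B`. Hence
`(A + B)^(k+1) = A^(k+1) + B^(k+1)`, and each Drazin equation for `A + B` splits into those for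
`A` and `B`. The difference is the sum with `-B`, whose Drazin inverse is `-B^D`. For `k = 0`
both matrices are invertible, which together with `AB = 0` forces the matrix ring to be trivial.
-/

section SemigroupWithZero

variable {R : Type*} [SemigroupWithZero R] {a b x : R}

theorem mul_eq_zero_of_mul_eq_zero_of_mul_mul_eq_self (hx : x * a * x = x)
    (hax : a * x = x * a) (hab : a * b = 0) : x * b = 0 :=
  calc x * b = x * x * (a * b) := by
        nth_rewrite 1 [← hx]; rw [mul_assoc x a x, hax]; simp only [mul_assoc]
    _ = 0 := by rw [hab, mul_zero]

theorem mul_eq_zero_of_mul_eq_zero_of_mul_mul_eq_self' (hx : x * a * x = x)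
    (hax : a * x = x * a) (hba : b * a = 0) : b * x = 0 :=
  calc b * x = b * a * (x * x) := by
        nth_rewrite 1 [← hx]; rw [← hax]; simp only [mul_assoc]
    _ = 0 := by rw [hba, zero_mul]

end SemigroupWithZero

section Semiring

variable {R : Type*} [Semiring R] {a b : R}

theorem mul_pow_succ_eq_zero_of_mul_eq_zero (hab : a * b = 0) (m : ℕ) : a * b ^ (m + 1) = 0 := by
  rw [pow_succ', ← mul_assoc, hab, zero_mul]

theorem pow_succ_mul_eq_zero_of_mul_eq_zero (hab : a * b = 0) (m : ℕ) : a ^ (m + 1) * b = 0 := by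
  rw [pow_succ, mul_assoc, hab, mul_zero]

theorem add_pow_succ_of_mul_eq_zero (hab : a * b = 0) (hba : b * a = 0) (m : ℕ) :
    (a + b) ^ (m + 1) = a ^ (m + 1) + b ^ (m + 1) := by
  induction m with
  | zero => simp only [zero_add, pow_one]
  | succ m ih =>
    rw [pow_succ' (a + b), ih, add_mul, mul_add, mul_add, mul_pow_succ_eq_zero_of_mul_eq_zero hab,
      mul_pow_succ_eq_zero_of_mul_eq_zero hba, add_zero, zero_add, ← pow_succ', ← pow_succ']

end Semiring

namespace IsDrazinInverse

variable {n : Type*} [Fintype n] [DecidableEq n] {A B X Y : Matrix n n ℂ} {k : ℕ}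

theorem add (hX : IsDrazinInverse A X k) (hY : IsDrazinInverse B Y k) (hAB : A * B = 0)
    (hBA : B * A = 0) : IsDrazinInverse (A + B) (X + Y) k := by
  obtain ⟨hX₁, hX₂, hX₃⟩ := hX
  obtain ⟨hY₁, hY₂, hY₃⟩ := hY
  have hXB : X * B = 0 := mul_eq_zero_of_mul_eq_zero_of_mul_mul_eq_self hX₂ hX₃ hAB
  have hYA : Y * A = 0 := mul_eq_zero_of_mul_eq_zero_of_mul_mul_eq_self hY₂ hY₃ hBA
  have hBX : B * X = 0 := mul_eq_zero_of_mul_eq_zero_of_mul_mul_eq_self' hX₂ hX₃ hBA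
  have hAY : A * Y = 0 := mul_eq_zero_of_mul_eq_zero_of_mul_mul_eq_self' hY₂ hY₃ hAB
  refine ⟨?_, ?_, ?_⟩
  · cases k with
    | zero =>
      simp only [zero_add, pow_one, pow_zero] at hX₁ hY₁
      have h01 : (0 : Matrix n n ℂ) = 1 :=
        calc 0 = B * (Y * A * X) := by rw [hYA, zero_mul, mul_zero]
          _ = 1 := by rw [mul_assoc Y, hX₁, mul_one, hY₁]
      exact eq_of_zero_eq_one h01 _ _
    | succ m =>
      rw [add_pow_succ_of_mul_eq_zero hAB hBA, add_mul, mul_add, mul_add,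
        pow_succ_mul_eq_zero_of_mul_eq_zero hAY, pow_succ_mul_eq_zero_of_mul_eq_zero hBX,
        add_zero, zero_add, hX₁, hY₁, add_pow_succ_of_mul_eq_zero hAB hBA]
  · have hXAY : X * A * Y = 0 := by rw [mul_assoc, hAY, mul_zero]
    have hYBX : Y * B * X = 0 := by rw [mul_assoc, hBX, mul_zero]
    simp only [add_mul, mul_add, hXB, hYA, hXAY, hYBX, add_zero, zero_add, hX₂, hY₂]
  · simp only [mul_add, add_mul, hAY, hBX, hXB, hYA, add_zero, zero_add, hX₃, hY₃]

theorem neg (hX : IsDrazinInverse A X k) : IsDrazinInverse (-A) (-X) k := by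
  obtain ⟨h₁, h₂, h₃⟩ := hX
  refine ⟨?_, by rw [neg_mul_neg, mul_neg, h₂], by rw [neg_mul_neg, neg_mul_neg, h₃]⟩
  rw [pow_succ, mul_assoc, neg_mul_neg, neg_pow, mul_assoc, ← mul_assoc (A ^ k), ← pow_succ, h₁]

end IsDrazinInverse

theorem drazin_add_sub {n : Type*} [Fintype n] [DecidableEq n]
    (A B X Y : Matrix n n ℂ) (k : ℕ)
    (hAB : A * B = 0) (hBA : B * A = 0)
    (hX : IsDrazinInverse A X k) (hY : IsDrazinInverse B Y k) :
    IsDrazinInverse (A + B) (X + Y) k ∧ IsDrazinInverse (A - B) (X - Y) k := by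
  refine ⟨hX.add hY hAB hBA, ?_⟩
  rw [sub_eq_add_neg, sub_eq_add_neg]
  exact hX.add hY.neg (by rw [mul_neg, hAB, neg_zero]) (by rw [neg_mul, hBA, neg_zero])
end

section
/- If A and B are group invertible and AB = 0, then (A+B)^# = (I − B B^#) A^# + B^# (I − A A^#). -/
def IsGroupInverse {n : Type*} [Fintype n] [DecidableEq n]
    (A X : Matrix n n ℂ) : Prop :=
  A * X * A = A ∧ X * A * X = X ∧ A * X = X * A

namespace Monoid

structure IsGroupInverse {M : Type*} [Monoid M] (a x : M) : Prop where
  mul_inv_mul : a * x * a = a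
  inv_mul_inv : x * a * x = x
  commute : Commute a x

namespace IsGroupInverse

section Monoid

variable {M : Type*} [Monoid M] {a x : M}

theorem inv_mul_mul_inv (h : IsGroupInverse a x) : x * (a * x) = x := by
  rw [← mul_assoc, h.inv_mul_inv]

theorem mul_inv_mul_mul_inv (h : IsGroupInverse a x) : a * x * (a * x) = a * x := by
  rw [← mul_assoc, h.mul_inv_mul]

theorem mul_mul_inv (h : IsGroupInverse a x) : a * (a * x) = a := by
  rw [h.commute.eq, ← mul_assoc, h.mul_inv_mul]

end Monoid

section MonoidWithZero

variable {M : Type*} [MonoidWithZero M] {a b x y : M}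

theorem inv_mul_eq_zero_of_mul_eq_zero (h : IsGroupInverse a x) (hab : a * b = 0) :
    x * b = 0 := by
  rw [← h.inv_mul_mul_inv, h.commute.eq, mul_assoc, mul_assoc, hab, mul_zero, mul_zero]

theorem mul_inv_eq_zero_of_mul_eq_zero (h : IsGroupInverse b y) (hab : a * b = 0) :
    a * y = 0 := by
  rw [← h.inv_mul_inv, h.commute.symm.eq, ← mul_assoc, ← mul_assoc, hab, zero_mul, zero_mul]

end MonoidWithZero

section Ring

variable {R : Type*} [Ring R] {a b x y : R}

theorem mul_inv_mul_add (h : IsGroupInverse a x) (hab : a * b = 0) : a * x * (a + b) = a := by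
  rw [mul_add, h.mul_inv_mul, mul_assoc, h.inv_mul_eq_zero_of_mul_eq_zero hab, mul_zero, add_zero]

theorem one_sub_mul_inv_mul_add (h : IsGroupInverse a x) (hab : a * b = 0) :
    (1 - a * x) * (a + b) = b := by
  rw [sub_mul, one_mul, h.mul_inv_mul_add hab, add_sub_cancel_left]

theorem add_mul_inv_add (hB : IsGroupInverse b y) (hab : a * b = 0) :
    (a + b) * ((1 - b * y) * x + y * (1 - a * x)) = a * x + b * y * (1 - a * x) := by
  have hcompl : (a + b) * (1 - b * y) = a := by
    rw [mul_sub, mul_one, add_mul, ← mul_assoc, hab, zero_mul, hB.mul_mul_inv, zero_add,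
      add_sub_cancel_right]
  have hy : (a + b) * y = b * y := by
    rw [add_mul, hB.mul_inv_eq_zero_of_mul_eq_zero hab, zero_add]
  rw [mul_add, ← mul_assoc, ← mul_assoc, hcompl, hy]

theorem inv_add_mul_add (hA : IsGroupInverse a x) (hB : IsGroupInverse b y) (hab : a * b = 0) :
    ((1 - b * y) * x + y * (1 - a * x)) * (a + b) = a * x + b * y * (1 - a * x) := by
  have hx : x * (a + b) = a * x := by
    rw [mul_add, hA.inv_mul_eq_zero_of_mul_eq_zero hab, add_zero, hA.commute.eq]
  calc _ = (1 - b * y) * (x * (a + b)) + y * ((1 - a * x) * (a + b)) := by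
        rw [add_mul, mul_assoc, mul_assoc]
    _ = _ := by rw [hx, hA.one_sub_mul_inv_mul_add hab, ← hB.commute.eq]; noncomm_ring

theorem add_of_mul_eq_zero (hA : IsGroupInverse a x) (hB : IsGroupInverse b y) (hab : a * b = 0) :
    IsGroupInverse (a + b) ((1 - b * y) * x + y * (1 - a * x)) := by
  have hxq : x * (b * y) = 0 := by
    rw [← mul_assoc, hA.inv_mul_eq_zero_of_mul_eq_zero hab, zero_mul]
  have hpq : a * x * (b * y) = 0 := by rw [mul_assoc, hxq, mul_zero]
  have hl := hB.add_mul_inv_add (x := x) hab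
  refine ⟨?_, ?_, hl.trans (hA.inv_add_mul_add hB hab).symm⟩
  · rw [hl, add_mul, hA.mul_inv_mul_add hab, mul_assoc, hA.one_sub_mul_inv_mul_add hab,
      hB.mul_inv_mul]
  · have hxe : x * (a * x + b * y * (1 - a * x)) = x := by
      rw [mul_add, hA.inv_mul_mul_inv, ← mul_assoc, hxq, zero_mul, add_zero]
    have hpe : (1 - a * x) * (a * x + b * y * (1 - a * x)) = b * y * (1 - a * x) := by
      rw [sub_mul, one_mul, mul_add, hA.mul_inv_mul_mul_inv, ← mul_assoc, hpq, zero_mul,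
        add_zero, add_sub_cancel_left]
    rw [mul_assoc, hl, add_mul, mul_assoc, hxe, mul_assoc, hpe, ← mul_assoc y,
      hB.inv_mul_mul_inv]

end Ring

end IsGroupInverse

end Monoid

theorem isGroupInverse_iff_monoid {n : Type*} [Fintype n] [DecidableEq n] {A X : Matrix n n ℂ} :
    IsGroupInverse A X ↔ Monoid.IsGroupInverse A X :=
  ⟨fun ⟨h₁, h₂, h₃⟩ => ⟨h₁, h₂, h₃⟩, fun ⟨h₁, h₂, h₃⟩ => ⟨h₁, h₂, h₃⟩⟩

theorem group_inverse_add {n : Type*} [Fintype n] [DecidableEq n]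
    (A B X Y : Matrix n n ℂ)
    (hA : IsGroupInverse A X) (hB : IsGroupInverse B Y)
    (hAB : A * B = 0) :
    IsGroupInverse (A + B) ((1 - B * Y) * X + Y * (1 - A * X)) :=
  isGroupInverse_iff_monoid.2 <|
    (isGroupInverse_iff_monoid.1 hA).add_of_mul_eq_zero (isGroupInverse_iff_monoid.1 hB) hAB
end

section
/- The Drazin inverse can be computed via the Moore–Penrose inverse: A^D = A^k (A^(2k+1))† A^k, where k = ind(A). -/
/-!
Put `u = D ^ (k + 1)` and `N = A ^ (2k + 1)`. Since `A` and `D` commute, `A ^ k (A D) = A ^ k` and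
`D (A D) = D` give `u N = N u = A ^ k` and `D = u A ^ k = u N u`, so
`A ^ k G A ^ k = u (N G N) u = u N u = D`.
-/

open Matrix

def IsMoorePenrose {n : Type*} [Fintype n] [DecidableEq n]
    (M G : Matrix n n ℂ) : Prop :=
  M * G * M = M ∧ G * M * G = G ∧ (M * G)ᴴ = M * G ∧ (G * M)ᴴ = G * M

section Monoid

variable {M : Type*} [Monoid M]

theorem mul_pow_eq_self_of_mul_eq_self {x y : M} (h : x * y = x) : ∀ j : ℕ, x * y ^ j = x
  | 0 => by rw [pow_zero, mul_one]
  | j + 1 => by rw [pow_succ, ← mul_assoc, mul_pow_eq_self_of_mul_eq_self h j, h]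

namespace Commute

variable {a d : M}

theorem pow_add_mul_pow_eq {k : ℕ} (hc : Commute a d) (h : a ^ (k + 1) * d = a ^ k) (j : ℕ) :
    a ^ (k + j) * d ^ j = a ^ k := by
  rw [pow_add, mul_assoc, ← hc.mul_pow]
  exact mul_pow_eq_self_of_mul_eq_self (by rw [← mul_assoc, ← pow_succ, h]) j

theorem pow_succ_mul_pow_eq (hc : Commute a d) (h : d * a * d = d) (j : ℕ) :
    d ^ (j + 1) * a ^ j = d := by
  rw [pow_succ', mul_assoc, ← hc.symm.mul_pow]
  exact mul_pow_eq_self_of_mul_eq_self (by rw [← hc.eq, ← mul_assoc, h]) j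

theorem eq_pow_mul_mul_pow {k : ℕ} (hc : Commute a d) (h₁ : a ^ (k + 1) * d = a ^ k)
    (h₂ : d * a * d = d) {g : M} (hg : a ^ (2 * k + 1) * g * a ^ (2 * k + 1) = a ^ (2 * k + 1)) :
    d = a ^ k * g * a ^ k := by
  have hr : a ^ (2 * k + 1) * d ^ (k + 1) = a ^ k := by
    rw [two_mul, add_assoc]
    exact hc.pow_add_mul_pow_eq h₁ (k + 1)
  have hl : d ^ (k + 1) * a ^ (2 * k + 1) = a ^ k :=
    (hc.pow_pow (2 * k + 1) (k + 1)).eq.symm.trans hr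
  calc d = d ^ (k + 1) * a ^ k := (hc.pow_succ_mul_pow_eq h₂ k).symm
    _ = d ^ (k + 1) * (a ^ (2 * k + 1) * g * a ^ (2 * k + 1)) * d ^ (k + 1) := by
        rw [hg, mul_assoc, hr]
    _ = (d ^ (k + 1) * a ^ (2 * k + 1)) * g * (a ^ (2 * k + 1) * d ^ (k + 1)) := by
        simp only [mul_assoc]
    _ = a ^ k * g * a ^ k := by rw [hl, hr]

end Commute

end Monoid

theorem drazin_via_moore_penrose_general {n : Type*} [Fintype n] [DecidableEq n]
    (A D G : Matrix n n ℂ) (k : ℕ)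
    (hD : IsDrazinInverse A D k)
    (hG : IsMoorePenrose (A ^ (2 * k + 1)) G) :
    D = A ^ k * G * A ^ k :=
  let ⟨hpow, hDAD, hcomm⟩ := hD
  Commute.eq_pow_mul_mul_pow hcomm hpow hDAD hG.1

theorem drazin_via_moore_penrose {n : Type*} [Fintype n] [DecidableEq n]
    (A D G : Matrix n n ℂ) (k : ℕ) (hk : HasIndex A k)
    (hD : IsDrazinInverse A D k)
    (hG : IsMoorePenrose (A ^ (2 * k + 1)) G) :
    D = A ^ k * G * A ^ k :=
  drazin_via_moore_penrose_general A D G k hD hG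
end

section
/- If ind(A) = 1, then the group inverse is given by A^# = A (A^3)^(1) A for any {1}-inverse (A^3)^(1) of A^3. -/
/-! Since `A` commutes with its group inverse `X`, both `X² A³` and `A³ X²` equal `A`. Hence
`A G A = X² (A³ G A³) X² = X² A³ X² = A X² = X`. -/

section GroupInverse

variable {M : Type*} [Monoid M] {a x : M}

lemma mul_sq_eq_of_mul_mul_eq_self (hxax : x * a * x = x) (hcomm : Commute a x) :
    a * x ^ 2 = x := by
  rw [sq, ← mul_assoc, hcomm.eq, hxax]

lemma sq_mul_eq_of_mul_mul_eq_self (hxax : x * a * x = x) (hcomm : Commute a x) :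
    x ^ 2 * a = x := by
  rw [← (hcomm.pow_right 2).eq, mul_sq_eq_of_mul_mul_eq_self hxax hcomm]

lemma sq_mul_pow_three_of_groupInverse (haxa : a * x * a = a) (hxax : x * a * x = x)
    (hcomm : Commute a x) : x ^ 2 * a ^ 3 = a := by
  calc x ^ 2 * a ^ 3 = x ^ 2 * a * a * a := by simp only [pow_succ, pow_zero, one_mul, mul_assoc]
    _ = a := by rw [sq_mul_eq_of_mul_mul_eq_self hxax hcomm, ← hcomm.eq, haxa]

lemma pow_three_mul_sq_of_groupInverse (haxa : a * x * a = a) (hxax : x * a * x = x)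
    (hcomm : Commute a x) : a ^ 3 * x ^ 2 = a := by
  rw [(hcomm.pow_pow 3 2).eq, sq_mul_pow_three_of_groupInverse haxa hxax hcomm]

lemma eq_mul_mul_of_pow_three_mul_mul_pow_three {g : M} (haxa : a * x * a = a)
    (hxax : x * a * x = x) (hcomm : Commute a x) (hg : a ^ 3 * g * a ^ 3 = a ^ 3) :
    x = a * g * a := by
  calc x = x ^ 2 * a ^ 3 * x ^ 2 := by
        rw [sq_mul_pow_three_of_groupInverse haxa hxax hcomm,
          mul_sq_eq_of_mul_mul_eq_self hxax hcomm]
    _ = x ^ 2 * (a ^ 3 * g * a ^ 3) * x ^ 2 := by rw [hg]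
    _ = x ^ 2 * a ^ 3 * g * (a ^ 3 * x ^ 2) := by simp only [mul_assoc]
    _ = a * g * a := by
        rw [sq_mul_pow_three_of_groupInverse haxa hxax hcomm,
          pow_three_mul_sq_of_groupInverse haxa hxax hcomm]

end GroupInverse

theorem group_inverse_via_one_inverse {n : Type*} [Fintype n] [DecidableEq n]
    (A X G : Matrix n n ℂ)
    (hX : IsGroupInverse A X)
    (hG : A ^ 3 * G * A ^ 3 = A ^ 3) :
    X = A * G * A := by
  obtain ⟨hAXA, hXAX, hcomm⟩ := hX
  exact eq_mul_mul_of_pow_three_mul_mul_pow_three hAXA hXAX hcomm hG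
end
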